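/- arXiv:1206.4164 — 4 statements merged into one kernel-verified Lean document; each statement's English description precedes it below -/
import Mathlib

section
/- Let (V, d) be a finite metric space with integer-valued distances, n a positive natural number, k a positive integer, and ε > 0. Suppose D : V × V → ℝ satisfies d(v1, v2) ≤ D(v1, v2) ≤ (2k − 1) · d(v1, v2) for all v1, v2, and τ : V × V → ℕ satisfies τ(v1, v2) ≥ d(v1, v2) for all v1, v2 and τ(v1, v2) = d(v1, v2) whenever d(v1, v2) ≥ ε·n / (2k − 1). Define A(v1, v2) to be τ(v1, v2) if D(v1, v2) ≥ ε·n and τ(v1, v2) ≥ ε·n, and ⊥ (no answer) otherwise. Then for all v1, v2 ∈ V: if d(v1, v2) < ε·n then A(v1, v2) = ⊥, and if d(v1, v2) ≥ ε·n then A(v1, v2) = d(v1, v2). -/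
/-! A query at distance `d < εn` that passed the oracle test `D ≥ εn` has
`d ≥ D / (2k−1) ≥ εn / (2k−1)`, so `τ` is exact there and the test `τ ≥ εn` fails.
A query at distance `d ≥ εn ≥ εn / (2k−1)` has `τ = d ≤ D`, so both tests pass and the answer is `d`. -/

lemma div_le_of_le_of_le_mul {t D c d : ℝ} (hc : 0 < c) (ht : t ≤ D) (hD : D ≤ c * d) :
    t / c ≤ d :=
  (div_le_iff₀' hc).2 (ht.trans hD)

theorem combined_oracle_answers_general {V : Type*}
    (d : V → V → ℕ)
    (n : ℕ) (k : ℕ) (hk : 1 ≤ k) (ε : ℝ) (hε : 0 < ε)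
    (D : V → V → ℝ)
    (hD_lb : ∀ v1 v2, (d v1 v2 : ℝ) ≤ D v1 v2)
    (hD_ub : ∀ v1 v2, D v1 v2 ≤ (2 * (k : ℝ) - 1) * (d v1 v2 : ℝ))
    (τ : V → V → ℕ)
    (hτ_eq : ∀ v1 v2, ε * (n : ℝ) / (2 * (k : ℝ) - 1) ≤ (d v1 v2 : ℝ) →
      τ v1 v2 = d v1 v2)
    (A : V → V → Option ℕ)
    (hA_some : ∀ v1 v2, ε * (n : ℝ) ≤ D v1 v2 → ε * (n : ℝ) ≤ (τ v1 v2 : ℝ) →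
      A v1 v2 = some (τ v1 v2))
    (hA_none : ∀ v1 v2, ¬(ε * (n : ℝ) ≤ D v1 v2 ∧ ε * (n : ℝ) ≤ (τ v1 v2 : ℝ)) →
      A v1 v2 = none) :
    ∀ v1 v2 : V,
      ((d v1 v2 : ℝ) < ε * (n : ℝ) → A v1 v2 = none) ∧
      (ε * (n : ℝ) ≤ (d v1 v2 : ℝ) → A v1 v2 = some (d v1 v2)) := by
  intro v1 v2
  have hstretch : (1 : ℝ) ≤ 2 * (k : ℝ) - 1 := by
    have : (1 : ℝ) ≤ k := by exact_mod_cast hk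
    linarith
  constructor
  · intro hlt
    refine hA_none v1 v2 fun ⟨hD, hτ⟩ => ?_
    have hexact := hτ_eq v1 v2
      (div_le_of_le_of_le_mul (by linarith) hD (hD_ub v1 v2))
    rw [hexact] at hτ
    linarith
  · intro hge
    have hexact := hτ_eq v1 v2 ((div_le_self (by positivity) hstretch).trans hge)
    rw [hA_some v1 v2 (hge.trans (hD_lb v1 v2)) (hexact ▸ hge), hexact]

/-- Let `(V, d)` be a finite metric space with natural-number distances, `n` a positive natural
number, `k ≥ 1`, `ε > 0`. Suppose `D` is a `(2k−1)`-stretch distance oracle,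
i.e. `d ≤ D ≤ (2k−1)·d`, and `τ` never underestimates `d` and is exact on pairs with
`d ≥ ε·n/(2k−1)`. Define `A(v1, v2)` to be `some (τ(v1, v2))` if both `D(v1, v2) ≥ ε·n` and
`τ(v1, v2) ≥ ε·n`, and `none` otherwise. Then for all `v1, v2`: if `d(v1, v2) < ε·n` then
`A(v1, v2) = none`, and if `d(v1, v2) ≥ ε·n` then `A(v1, v2) = some (d(v1, v2))`. -/
theorem combined_oracle_answers {V : Type*} [Fintype V]
    (d : V → V → ℕ)
    (hd_self : ∀ v, d v v = 0)
    (hd_eq : ∀ v1 v2, d v1 v2 = 0 → v1 = v2)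
    (hd_symm : ∀ v1 v2, d v1 v2 = d v2 v1)
    (hd_tri : ∀ v1 v2 v3, d v1 v3 ≤ d v1 v2 + d v2 v3)
    (n : ℕ) (hn : 0 < n) (k : ℕ) (hk : 1 ≤ k) (ε : ℝ) (hε : 0 < ε)
    (D : V → V → ℝ)
    (hD_lb : ∀ v1 v2, (d v1 v2 : ℝ) ≤ D v1 v2)
    (hD_ub : ∀ v1 v2, D v1 v2 ≤ (2 * (k : ℝ) - 1) * (d v1 v2 : ℝ))
    (τ : V → V → ℕ)
    (hτ_ge : ∀ v1 v2, d v1 v2 ≤ τ v1 v2)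
    (hτ_eq : ∀ v1 v2, ε * (n : ℝ) / (2 * (k : ℝ) - 1) ≤ (d v1 v2 : ℝ) →
      τ v1 v2 = d v1 v2)
    (A : V → V → Option ℕ)
    (hA_some : ∀ v1 v2, ε * (n : ℝ) ≤ D v1 v2 → ε * (n : ℝ) ≤ (τ v1 v2 : ℝ) →
      A v1 v2 = some (τ v1 v2))
    (hA_none : ∀ v1 v2, ¬(ε * (n : ℝ) ≤ D v1 v2 ∧ ε * (n : ℝ) ≤ (τ v1 v2 : ℝ)) →
      A v1 v2 = none) :
    ∀ v1 v2 : V,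
      ((d v1 v2 : ℝ) < ε * (n : ℝ) → A v1 v2 = none) ∧
      (ε * (n : ℝ) ≤ (d v1 v2 : ℝ) → A v1 v2 = some (d v1 v2)) :=
  combined_oracle_answers_general d n k hk ε hε D hD_lb hD_ub τ hτ_eq A hA_some hA_none
end

section
/- There is a universal constant C such that the following holds. Let V be a finite set with n ≥ 2 elements and a : V → ℝ≥0. Define d'(u, v) := a(u) + a(v) for u ≠ v and d'(v, v) := 0. Then there exist m ≤ C · log n and a map h : V → ℝ^m such that for all u, v ∈ V: d'(u, v) ≤ ‖h(u) − h(v)‖₁ ≤ C · d'(u, v). -/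
/-!
Give the points of `V` the codewords of a binary code of length `m = 8s`, `s = ⌊log₂ n⌋ + 1`,
with pairwise Hamming distance at least `s`; such a code exists by the greedy
(Gilbert–Varshamov) argument, since `n` open Hamming balls of radius `s` cannot cover `{0,1}^m`.
Map `v` to the vector `(a v / s) · (±1)^{c v}`. Each coordinate contributes at most
`(a u + a v) / s` to `‖h u - h v‖₁`, and exactly that on the at least `s` coordinates where
the codewords of `u` and `v` differ, so the distortion is at most `m / s = 8`.
-/

open Finset

theorem card_hammingDist_lt_le {ι : Type*} [Fintype ι] [DecidableEq ι] (x : ι → Bool) (d : ℕ) :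
    #{y | hammingDist x y < d} ≤ ∑ k ∈ range d, (Fintype.card ι).choose k := by
  let flipOn (s : Finset ι) (i : ι) : Bool := if i ∈ s then !x i else x i
  have hball : ({y | hammingDist x y < d} : Finset (ι → Bool)) ⊆
      ((range d).biUnion fun k => powersetCard k univ).image flipOn := by
    intro y hy
    refine mem_image.mpr ⟨({i | x i ≠ y i} : Finset ι), ?_, ?_⟩
    · simp only [mem_biUnion, mem_range, mem_powersetCard]
      exact ⟨_, (mem_filter.mp hy).2, subset_univ _, rfl⟩
    · funext i
      by_cases h : x i = y i <;> simp [flipOn, h, Bool.eq_not_iff]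
  calc #{y | hammingDist x y < d}
      ≤ #((range d).biUnion fun k => powersetCard k (univ : Finset ι)) :=
        (card_le_card hball).trans card_image_le
    _ ≤ ∑ k ∈ range d, #(powersetCard k (univ : Finset ι)) := card_biUnion_le
    _ = ∑ k ∈ range d, (Fintype.card ι).choose k := by simp [card_powersetCard]

theorem exists_card_eq_pairwise_not_rel {α : Type*} [Fintype α] [DecidableEq α]
    (r : α → α → Prop) [DecidableRel r] (hrefl : ∀ x, r x x) (hsymm : ∀ x y, r x y → r y x)
    {B : ℕ} (hB : ∀ x, #{y | r x y} ≤ B) :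
    ∀ N : ℕ, N * B < Fintype.card α →
      ∃ S : Finset α, #S = N ∧ (S : Set α).Pairwise fun x y => ¬r x y
  | 0, _ => ⟨∅, by simp⟩
  | N + 1, hN => by
    obtain ⟨S, hcard, hS⟩ :=
      exists_card_eq_pairwise_not_rel r hrefl hsymm hB N (by nlinarith)
    have hcovered : #(S.biUnion fun x => {y | r x y}) < Fintype.card α :=
      calc #(S.biUnion fun x => {y | r x y})
          ≤ ∑ x ∈ S, #{y | r x y} := card_biUnion_le
        _ ≤ N * B := by simpa [hcard] using sum_le_sum fun x (_ : x ∈ S) => hB x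
        _ < Fintype.card α := by nlinarith
    obtain ⟨y, -, hy⟩ := exists_mem_notMem_of_card_lt_card hcovered
    simp only [mem_biUnion, mem_filter, mem_univ, true_and, not_exists, not_and] at hy
    refine ⟨insert y S, by rw [card_insert_of_notMem fun h => hy y h (hrefl y), hcard], ?_⟩
    rw [coe_insert, Set.pairwise_insert]
    exact ⟨hS, fun x hx _ => ⟨fun h => hy x hx (hsymm y x h), hy x hx⟩⟩

theorem exists_pairwise_le_hammingDist {V ι : Type*} [Fintype V] [Fintype ι] [DecidableEq ι] {d : ℕ} (hd : 0 < d)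
    (h : Fintype.card V * ∑ k ∈ range d, (Fintype.card ι).choose k < 2 ^ Fintype.card ι) :
    ∃ c : V → ι → Bool, Pairwise fun u v => d ≤ hammingDist (c u) (c v) := by
  obtain ⟨S, hcard, hS⟩ := exists_card_eq_pairwise_not_rel (fun x y => hammingDist x y < d)
    (by simpa using hd) (fun x y => by simp [hammingDist_comm]) (card_hammingDist_lt_le · d)
    (Fintype.card V) (by simpa using h)
  let e : V ≃ S := Fintype.equivOfCardEq (by simp [hcard])
  exact ⟨fun v => e v, fun u v huv =>
    not_lt.mp (hS (e u).2 (e v).2 (Subtype.coe_injective.ne (e.injective.ne huv)))⟩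

theorem sum_range_choose_mul_pow_le (m d : ℕ) {t : ℝ} (ht₀ : 0 ≤ t) (ht₁ : t ≤ 1) :
    (∑ i ∈ range d, (m.choose i : ℝ)) * t ^ d ≤ (1 + t) ^ m := by
  calc (∑ i ∈ range d, (m.choose i : ℝ)) * t ^ d
      ≤ ∑ i ∈ range d, (m.choose i : ℝ) * t ^ i := by
        rw [sum_mul]
        exact sum_le_sum fun i hi => mul_le_mul_of_nonneg_left
          (pow_le_pow_of_le_one ht₀ ht₁ (mem_range.mp hi).le) (by positivity)
    _ ≤ ∑ i ∈ range (d + (m + 1)), (m.choose i : ℝ) * t ^ i :=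
        sum_le_sum_of_subset_of_nonneg (range_subset_range.mpr (by omega))
          fun _ _ _ => by positivity
    _ = ∑ i ∈ range (m + 1), (m.choose i : ℝ) * t ^ i := by
        refine (sum_subset (range_subset_range.mpr (by omega)) fun i _ hi => ?_).symm
        rw [Nat.choose_eq_zero_of_lt (by simpa using hi), Nat.cast_zero, zero_mul]
    _ = (1 + t) ^ m := by
        rw [add_comm 1 t, add_pow]
        exact sum_congr rfl fun i _ => by ring

theorem nat_mul_sum_range_choose_lt {n s : ℕ} (hs : 0 < s) (hn : n ≤ 2 ^ s) :
    n * ∑ k ∈ range s, (8 * s).choose k < 2 ^ (8 * s) := by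
  have hbinom := sum_range_choose_mul_pow_le (8 * s) s (t := 1 / 7) (by norm_num) (by norm_num)
  have : (n : ℝ) * ∑ k ∈ range s, ((8 * s).choose k : ℝ) < 2 ^ (8 * s) :=
    calc (n : ℝ) * ∑ k ∈ range s, ((8 * s).choose k : ℝ)
        ≤ 2 ^ s * (7 ^ s * (8 / 7) ^ (8 * s)) := by
          gcongr
          · exact_mod_cast hn
          · rw [div_pow, one_pow, ← div_eq_mul_one_div, div_le_iff₀ (by positivity)] at hbinom
            norm_num at hbinom ⊢; linarith
      _ = (14 * (8 / 7) ^ 8) ^ s := by rw [pow_mul, ← mul_assoc, ← mul_pow, ← mul_pow]; norm_num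
      _ < (2 ^ 8) ^ s := by gcongr; norm_num
      _ = 2 ^ (8 * s) := by rw [← pow_mul, mul_comm]
  exact_mod_cast this

def signed : Bool → ℝ → ℝ
  | true, r => r
  | false, r => -r

theorem abs_signed_sub_signed_le {x y : ℝ} (hx : 0 ≤ x) (hy : 0 ≤ y) (b b' : Bool) :
    |signed b x - signed b' y| ≤ x + y := by
  rw [abs_le]
  cases b <;> cases b' <;> simp only [signed] <;> constructor <;> linarith

theorem abs_signed_sub_signed_of_ne {x y : ℝ} (hx : 0 ≤ x) (hy : 0 ≤ y) {b b' : Bool}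
    (h : b ≠ b') : |signed b x - signed b' y| = x + y := by
  cases b <;> cases b' <;> simp only [signed] at h ⊢ <;> first
    | exact absurd rfl h
    | rw [show -x - y = -(x + y) by ring, abs_neg, abs_of_nonneg (by linarith)]
    | rw [sub_neg_eq_add, abs_of_nonneg (by linarith)]

section SignedCode

variable {ι : Type*} [Fintype ι] {x y : ℝ}

theorem hammingDist_mul_le_sum_abs_signed_sub (hx : 0 ≤ x) (hy : 0 ≤ y) (b b' : ι → Bool) :
    hammingDist b b' * (x + y) ≤ ∑ i, |signed (b i) x - signed (b' i) y| :=
  calc hammingDist b b' * (x + y)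
      = ∑ i ∈ {i | b i ≠ b' i}, |signed (b i) x - signed (b' i) y| := by
        rw [sum_congr rfl fun i hi => abs_signed_sub_signed_of_ne hx hy (mem_filter.mp hi).2,
          sum_const, nsmul_eq_mul, hammingDist]
    _ ≤ ∑ i, |signed (b i) x - signed (b' i) y| :=
        sum_le_sum_of_subset_of_nonneg (subset_univ _) fun _ _ _ => abs_nonneg _

theorem sum_abs_signed_sub_le (hx : 0 ≤ x) (hy : 0 ≤ y) (b b' : ι → Bool) :
    ∑ i, |signed (b i) x - signed (b' i) y| ≤ Fintype.card ι * (x + y) := by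
  simpa [mul_add] using
    sum_le_sum fun i (_ : i ∈ univ) => abs_signed_sub_signed_le hx hy (b i) (b' i)

theorem sum_abs_signed_div_sub_mem_Icc (hx : 0 ≤ x) (hy : 0 ≤ y) {d : ℕ} (hd : 0 < d)
    {b b' : ι → Bool} (hdist : d ≤ hammingDist b b') :
    ∑ i, |signed (b i) (x / d) - signed (b' i) (y / d)| ∈
      Set.Icc (x + y) (Fintype.card ι / d * (x + y)) := by
  have hd' : (0 : ℝ) < d := by exact_mod_cast hd
  constructor
  · calc x + y = d * (x / d + y / d) := by field_simp
      _ ≤ hammingDist b b' * (x / d + y / d) := by gcongr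
      _ ≤ _ := hammingDist_mul_le_sum_abs_signed_sub (by positivity) (by positivity) b b'
  · calc _ ≤ Fintype.card ι * (x / d + y / d) :=
          sum_abs_signed_sub_le (by positivity) (by positivity) b b'
      _ = Fintype.card ι / d * (x + y) := by ring

end SignedCode

theorem eight_mul_log_add_one_le {n : ℕ} (hn : 2 ≤ n) :
    ((8 * (Nat.log 2 n + 1) : ℕ) : ℝ) ≤ 24 * Real.log n := by
  have hlog : (1 : ℝ) ≤ Nat.log 2 n := by exact_mod_cast Nat.le_log_of_pow_le (by norm_num) hn
  have hpow : Nat.log 2 n * Real.log 2 ≤ Real.log n := by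
    rw [← Real.log_pow]
    exact Real.log_le_log (by positivity) (by exact_mod_cast Nat.pow_log_le_self 2 (by omega))
  have hlog2 := Real.log_two_gt_d9
  push_cast
  nlinarith

/-- There is a universal constant `C` such that the following holds. For every finite set `V`
with `n ≥ 2` elements and every nonnegative `a : V → ℝ`, the metric
`d'(u, v) := a u + a v` for `u ≠ v`, `d'(v, v) := 0`, embeds into `(ℝ^m, ℓ1)` with distortion
at most `C`, for some `m ≤ C · log n`. -/
theorem star_metric_embeds_into_l1 :
    ∃ C : ℝ, 0 < C ∧
      ∀ (V : Type) [Fintype V] [DecidableEq V], 2 ≤ Fintype.card V →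
        ∀ a : V → ℝ, (∀ v, 0 ≤ a v) →
          ∃ m : ℕ, (m : ℝ) ≤ C * Real.log (Fintype.card V) ∧
            ∃ h : V → (Fin m → ℝ),
              ∀ u v : V,
                (if u = v then (0 : ℝ) else a u + a v) ≤ ∑ i, |h u i - h v i| ∧
                ∑ i, |h u i - h v i| ≤ C * (if u = v then (0 : ℝ) else a u + a v) := by
  refine ⟨24, by norm_num, fun V _ _ hn a ha => ?_⟩
  set s := Nat.log 2 (Fintype.card V) + 1
  have hs : 0 < s := Nat.succ_pos _
  obtain ⟨c, hc⟩ := exists_pairwise_le_hammingDist (V := V) (ι := Fin (8 * s)) hs (by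
    simpa using nat_mul_sum_range_choose_lt hs (Nat.lt_pow_succ_log_self one_lt_two _).le)
  refine ⟨8 * s, eight_mul_log_add_one_le hn, fun v i => signed (c v i) (a v / s),
    fun u v => ?_⟩
  rcases eq_or_ne u v with rfl | huv
  · simp
  obtain ⟨hlower, hupper⟩ := sum_abs_signed_div_sub_mem_Icc (ha u) (ha v) hs (hc huv)
  have hratio : (Fintype.card (Fin (8 * s)) : ℝ) / s = 8 := by
    rw [Fintype.card_fin]; push_cast; field_simp
  rw [if_neg huv]
  exact ⟨hlower, hupper.trans (by rw [hratio]; linarith [ha u, ha v])⟩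
end

section
/- There is a universal constant C such that the following holds. Let G = (V, E, w) be a finite weighted undirected graph with n vertices, d its shortest-path metric with respect to w, and d_unw its shortest-path metric with respect to unit weights. Then for every ε ∈ (0, 1/2) there exist m ∈ ℕ and a map f : V → ℝ^m with ε-distortion at most C · log(1/ε). -/
/-
The weighted distance `r a` from a vertex `a` to the nearest vertex that is far from `a` in hop
distance is attained along a shortest weighted path, which has at least `ε n` vertices, all within
`r a` of `a`; so the ball of radius `r a` around `a` holds at least `ε n` vertices. A greedy net
whose balls of these radii are pairwise disjoint therefore has at most `1 / ε` points, and it lies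
within `2 d(a, b)` of every endpoint `a` of a far pair `(a, b)`.

The net is embedded into `ℓ₁` by Bourgain's construction: coordinates are the distances to random
subsets of density `2^-(t+1)`. For the radii `ρ_t` at which both balls around `x` and `y` hold
`2^t` points, such a set meets the smaller ball around one point and misses the larger ball around
the other with probability at least `1 / 12`, which separates the coordinates by `ρ_{t+1} - ρ_t`;
these gaps telescope to `d(x, y) / 4`, while each scale costs at most `d(x, y)`. With
`log |N| + 1 = O(log (1 / ε))` scales, mapping every vertex to the image of its nearest net point,
plus a private coordinate recording its distance to the net, gives the required map.
-/

open Finset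

/-- The weight of a walk: the sum of the weights of its edges. -/
def SimpleGraph.walkWeight {V : Type*} (G : SimpleGraph V) (w : Sym2 V → ℝ)
    {u v : V} (p : G.Walk u v) : ℝ :=
  (p.edges.map w).sum

open Metric

lemma exists_fin_sum_abs_sub_eq {X ι : Type*} [Fintype ι] (g : X → ι → ℝ) :
    ∃ (m : ℕ) (g' : X → Fin m → ℝ), ∀ x y, ∑ i, |g' x i - g' y i| = ∑ i, |g x i - g y i| :=
  ⟨_, fun x => g x ∘ (Fintype.equivFin ι).symm,
    fun x y => Equiv.sum_comp (Fintype.equivFin ι).symm fun i => |g x i - g y i|⟩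

lemma sum_abs_single_sub_single {ι : Type*} [Fintype ι] [DecidableEq ι] {i j : ι} (hij : i ≠ j)
    (a b : ℝ) : ∑ k, |Pi.single i a k - Pi.single j b k| = |a| + |b| := by
  rw [Fintype.sum_eq_add i j hij fun k hk => by simp [hk.1, hk.2]]
  simp [hij, hij.symm]

namespace SimpleGraph

variable {V : Type*} (G : SimpleGraph V) (w : Sym2 V → ℝ)

lemma walkWeight_nonneg (hw : ∀ e ∈ G.edgeSet, 0 < w e) {u v : V} (p : G.Walk u v) :
    0 ≤ G.walkWeight w p :=
  List.sum_nonneg fun _ he => by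
    obtain ⟨e, he', rfl⟩ := List.mem_map.1 he
    exact (hw e (p.edges_subset_edgeSet he')).le

lemma walkWeight_append {u v x : V} (p : G.Walk u x) (q : G.Walk x v) :
    G.walkWeight w (p.append q) = G.walkWeight w p + G.walkWeight w q := by
  simp [walkWeight, Walk.edges_append]

lemma walkWeight_reverse {u v : V} (p : G.Walk u v) :
    G.walkWeight w p.reverse = G.walkWeight w p := by
  simp [walkWeight, Walk.edges_reverse, List.sum_reverse]

lemma walkWeight_bypass_le [DecidableEq V] (hw : ∀ e ∈ G.edgeSet, 0 < w e) {u v : V}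
    (p : G.Walk u v) : G.walkWeight w p.bypass ≤ G.walkWeight w p :=
  ((p.edges_bypass_sublist_edges).map w).sum_le_sum fun _ he => by
    obtain ⟨e, he', rfl⟩ := List.mem_map.1 he
    exact (hw e (p.edges_subset_edgeSet he')).le

variable {G w} {d : V → V → ℝ} (hw : ∀ e ∈ G.edgeSet, 0 < w e)
  (hd : ∀ u v, IsLeast {x | ∃ p : G.Walk u v, p.IsPath ∧ G.walkWeight w p = x} (d u v))
include hw hd

lemma le_walkWeight_of_isLeast {u v : V} (p : G.Walk u v) : d u v ≤ G.walkWeight w p := by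
  classical
  exact ((hd u v).2 ⟨p.bypass, p.bypass_isPath, rfl⟩).trans (G.walkWeight_bypass_le w hw p)

abbrev shortestPathPseudoMetric : PseudoMetricSpace V where
  dist := d
  dist_self u := le_antisymm (le_walkWeight_of_isLeast hw hd Walk.nil)
    (by obtain ⟨p, -, hp⟩ := (hd u u).1; exact hp ▸ G.walkWeight_nonneg w hw p)
  dist_comm u v := by
    have hle : ∀ a b, d a b ≤ d b a := fun a b => by
      obtain ⟨p, -, hp⟩ := (hd b a).1
      exact (le_walkWeight_of_isLeast hw hd p.reverse).trans_eq (by rw [walkWeight_reverse, hp])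
    exact le_antisymm (hle u v) (hle v u)
  dist_triangle u x v := by
    obtain ⟨p, -, hp⟩ := (hd u x).1
    obtain ⟨q, -, hq⟩ := (hd x v).1
    rw [← hp, ← hq, ← walkWeight_append]
    exact le_walkWeight_of_isLeast hw hd _

theorem dist_lt_card_of_isLeast [Fintype V] (a b : V) : G.dist a b < #{x | d a x ≤ d a b} := by
  classical
  obtain ⟨p, hp, hpw⟩ := (hd a b).1
  have hsupport : p.support.toFinset ⊆ ({x | d a x ≤ d a b} : Finset V) := fun x hx => by
    rw [List.mem_toFinset] at hx
    rw [mem_filter, ← hpw, ← p.take_spec hx, walkWeight_append]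
    exact ⟨mem_univ x, le_add_of_le_of_nonneg ((hd a x).2 ⟨_, hp.takeUntil hx, rfl⟩)
      (G.walkWeight_nonneg w hw _)⟩
  calc G.dist a b ≤ p.length := dist_le p
    _ < #p.support.toFinset := by
      rw [List.toFinset_card_of_nodup hp.support_nodup, Walk.length_support]; omega
    _ ≤ #{x | d a x ≤ d a b} := card_le_card hsupport

end SimpleGraph

namespace Bourgain

section RandomSubset

variable {X : Type*} [Fintype X]

/-- The probability that a random subset of `X`, containing each point independently with
probability `p`, equals `S`. -/
noncomputable def subsetWeight (p : ℝ) (S : Finset X) : ℝ :=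
  p ^ #S * (1 - p) ^ (Fintype.card X - #S)

lemma subsetWeight_nonneg {p : ℝ} (hp₀ : 0 ≤ p) (hp₁ : p ≤ 1) (S : Finset X) :
    0 ≤ subsetWeight p S :=
  mul_nonneg (pow_nonneg hp₀ _) (pow_nonneg (by linarith) _)

lemma subsetWeight_inv_two_pow_nonneg (t : ℕ) (S : Finset X) :
    0 ≤ subsetWeight (2⁻¹ ^ (t + 1)) S :=
  subsetWeight_nonneg (by positivity) (pow_le_one₀ (by norm_num) (by norm_num)) S

open scoped Classical in
lemma sum_subsetWeight_disjoint (p : ℝ) (C : Finset X) :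
    ∑ S with Disjoint S C, subsetWeight p S = (1 - p) ^ #C := by
  have hfilter : ({S | Disjoint S C} : Finset (Finset X)) = Cᶜ.powerset := by
    ext S; simp [subset_compl_iff_disjoint_right]
  have hcard : #Cᶜ + #C = Fintype.card X := by rw [card_compl]; have := card_le_univ C; omega
  calc ∑ S with Disjoint S C, subsetWeight p S
      = ∑ S ∈ Cᶜ.powerset, (1 - p) ^ #C * (p ^ #S * (1 - p) ^ (#Cᶜ - #S)) := by
        rw [hfilter]
        refine sum_congr rfl fun S hS => ?_
        have : #S ≤ #Cᶜ := card_le_card (mem_powerset.1 hS)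
        rw [subsetWeight, mul_left_comm, ← pow_add]
        congr 3
        omega
    _ = (1 - p) ^ #C := by rw [← mul_sum, sum_pow_mul_eq_add_pow]; simp

lemma sum_subsetWeight (p : ℝ) : ∑ S : Finset X, subsetWeight p S = 1 := by
  classical
  simpa using sum_subsetWeight_disjoint p (∅ : Finset X)

open scoped Classical in
lemma sum_subsetWeight_meet_disjoint (p : ℝ) {A B : Finset X} (hAB : Disjoint A B) :
    ∑ S with ¬Disjoint S A ∧ Disjoint S B, subsetWeight p S
      = (1 - (1 - p) ^ #A) * (1 - p) ^ #B := by
  have hsplit := sum_filter_add_sum_filter_not ({S | Disjoint S B} : Finset (Finset X))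
    (fun S => Disjoint S A) (subsetWeight p)
  simp only [filter_filter, ← disjoint_union_right, sum_subsetWeight_disjoint] at hsplit
  rw [card_union_of_disjoint hAB.symm, pow_add] at hsplit
  simp only [and_comm]
  linear_combination hsplit

end RandomSubset

lemma one_sub_pow_le_two_thirds {p : ℝ} {m : ℕ} (hp₀ : 0 ≤ p) (hp₁ : p ≤ 1)
    (hmp : 1 / 2 ≤ m * p) : (1 - p) ^ m ≤ 2 / 3 := by
  have hbernoulli : 1 + m * p ≤ (1 + p) ^ m := one_add_mul_le_pow (by linarith) m
  have hprod : (1 + p) ^ m * (1 - p) ^ m ≤ 1 := by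
    rw [← mul_pow]; exact pow_le_one₀ (by nlinarith) (by nlinarith)
  nlinarith [pow_nonneg (sub_nonneg.2 hp₁) m]

lemma quarter_le_one_sub_pow (t : ℕ) : 1 / 4 ≤ (1 - 2⁻¹ ^ (t + 1) : ℝ) ^ 2 ^ (t + 1) := by
  induction t with
  | zero => norm_num
  | succ t ih =>
    -- `(1 - x) ^ 2 ≥ 1 - 2x` with `x = 2⁻¹ ^ (t + 2)`
    have hsq : 1 - 2⁻¹ ^ (t + 1) ≤ (1 - 2⁻¹ ^ (t + 2) : ℝ) ^ 2 := by
      rw [pow_succ _ (t + 1)]; nlinarith [pow_nonneg (by norm_num : (0 : ℝ) ≤ 2⁻¹) (t + 1)]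
    have hnonneg : (0 : ℝ) ≤ 1 - 2⁻¹ ^ (t + 1) :=
      sub_nonneg.2 (pow_le_one₀ (by norm_num) (by norm_num))
    calc 1 / 4 ≤ (1 - 2⁻¹ ^ (t + 1) : ℝ) ^ 2 ^ (t + 1) := ih
      _ ≤ ((1 - 2⁻¹ ^ (t + 2)) ^ 2) ^ 2 ^ (t + 1) := pow_le_pow_left₀ hnonneg hsq _
      _ = (1 - 2⁻¹ ^ (t + 2)) ^ 2 ^ (t + 2) := by rw [← pow_mul, ← pow_succ']

lemma twelfth_le_one_sub_pow_mul_pow {t a b : ℕ} (ha : 2 ^ t ≤ a) (hb : b < 2 ^ (t + 1)) :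
    1 / 12 ≤ (1 - (1 - 2⁻¹ ^ (t + 1) : ℝ) ^ a) * (1 - 2⁻¹ ^ (t + 1)) ^ b := by
  set p : ℝ := 2⁻¹ ^ (t + 1)
  have hp₀ : 0 ≤ p := by positivity
  have hp₁ : p ≤ 1 := pow_le_one₀ (by norm_num) (by norm_num)
  have hmeet : (1 - p) ^ a ≤ 2 / 3 := by
    refine (pow_le_pow_of_le_one (sub_nonneg.2 hp₁) (by linarith) ha).trans
      (one_sub_pow_le_two_thirds hp₀ hp₁ (le_of_eq ?_))
    simp only [p, pow_succ, Nat.cast_pow]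
    rw [← mul_assoc, ← mul_pow]; norm_num
  have hmiss : 1 / 4 ≤ (1 - p) ^ b :=
    (quarter_le_one_sub_pow t).trans (pow_le_pow_of_le_one (sub_nonneg.2 hp₁) (by linarith) hb.le)
  nlinarith

section Metric

variable {X : Type*} [PseudoMetricSpace X]

lemma sub_le_infDist_sub {a b : X} {r₁ r₂ : ℝ} {S : Set X} (hmeet : ∃ z ∈ S, dist a z ≤ r₁)
    (hmiss : ∀ z ∈ S, r₂ ≤ dist b z) : r₂ - r₁ ≤ infDist b S - infDist a S := by
  obtain ⟨z, hzS, hz⟩ := hmeet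
  have h₁ : infDist a S ≤ r₁ := (infDist_le_dist_of_mem hzS).trans hz
  have h₂ : r₂ ≤ infDist b S := (le_infDist ⟨z, hzS⟩).2 hmiss
  linarith

variable [Fintype X]

/-- The least radius at which the closed ball around `x` holds `k` points, capped at `c`; it is `c`
when no ball holds `k` points. -/
noncomputable def ballRadius (x : X) (k : ℕ) (c : ℝ) : ℝ :=
  (insert c {ρ ∈ univ.image (dist x) | k ≤ #{z | dist x z ≤ ρ}}).min' (insert_nonempty _ _)

lemma ballRadius_le (x : X) (k : ℕ) (c : ℝ) : ballRadius x k c ≤ c :=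
  min'_le _ _ (mem_insert_self _ _)

lemma le_card_closedBall_ballRadius {x : X} {k : ℕ} {c : ℝ} (h : ballRadius x k c < c) :
    k ≤ #{z | dist x z ≤ ballRadius x k c} := by
  have hmem := min'_mem (insert c {ρ ∈ univ.image (dist x) | k ≤ #{z | dist x z ≤ ρ}})
    (insert_nonempty _ _)
  rcases mem_insert.1 hmem with heq | hmem
  · exact absurd heq (ne_of_lt h)
  · exact (mem_filter.1 hmem).2

lemma card_ball_ballRadius_lt {x : X} {k : ℕ} (hk : 0 < k) (c : ℝ) :
    #{z | dist x z < ballRadius x k c} < k := by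
  by_contra! hcard
  obtain ⟨z₀, hz₀, hmax⟩ := exists_max_image {z | dist x z < ballRadius x k c} (dist x)
    (card_pos.1 (hk.trans_le hcard))
  have hball : k ≤ #{z | dist x z ≤ dist x z₀} :=
    hcard.trans (card_le_card fun z hz => by simpa using hmax z hz)
  have : ballRadius x k c ≤ dist x z₀ :=
    min'_le _ (dist x z₀)
      (mem_insert_of_mem (mem_filter.2 ⟨mem_image_of_mem _ (mem_univ _), hball⟩))
  exact (mem_filter.1 hz₀).2.not_ge this

lemma ballRadius_one (x : X) {c : ℝ} (hc : 0 ≤ c) : ballRadius x 1 c = 0 := by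
  refine le_antisymm (min'_le _ _ (mem_insert_of_mem (mem_filter.2 ⟨?_, ?_⟩))) (le_min' _ _ _ ?_)
  · exact mem_image.2 ⟨x, mem_univ _, dist_self x⟩
  · exact one_le_card.2 ⟨x, by simp⟩
  · intro ρ hρ
    rcases mem_insert.1 hρ with rfl | hρ
    · exact hc
    · obtain ⟨z, -, rfl⟩ := mem_image.1 (mem_filter.1 hρ).1
      exact dist_nonneg

lemma ballRadius_of_card_lt (x : X) {k : ℕ} (hk : Fintype.card X < k) (c : ℝ) :
    ballRadius x k c = c := by
  have hempty : {ρ ∈ univ.image (dist x) | k ≤ #{z | dist x z ≤ ρ}} = ∅ :=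
    filter_false_of_mem fun ρ _ h => (h.trans (card_le_univ _)).not_gt hk
  simp [ballRadius, hempty]

noncomputable def expectedGap (t : ℕ) (x y : X) : ℝ :=
  ∑ S : Finset X, subsetWeight (2⁻¹ ^ (t + 1)) S * |infDist x S - infDist y S|

lemma expectedGap_nonneg (t : ℕ) (x y : X) : 0 ≤ expectedGap t x y :=
  sum_nonneg fun S _ => mul_nonneg (subsetWeight_inv_two_pow_nonneg t S) (abs_nonneg _)

lemma expectedGap_comm (t : ℕ) (x y : X) : expectedGap t x y = expectedGap t y x := by
  simp only [expectedGap, abs_sub_comm]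

lemma expectedGap_le_dist (t : ℕ) (x y : X) : expectedGap t x y ≤ dist x y := by
  calc expectedGap t x y ≤ ∑ S : Finset X, subsetWeight (2⁻¹ ^ (t + 1)) S * dist x y :=
        sum_le_sum fun S _ => mul_le_mul_of_nonneg_left
          (by simpa [Real.dist_eq] using (lipschitz_infDist_pt (S : Set X)).dist_le_mul x y)
          (subsetWeight_inv_two_pow_nonneg t S)
    _ = dist x y := by rw [← sum_mul, sum_subsetWeight, one_mul]

open scoped Classical in
lemma le_expectedGap {a b : X} {t : ℕ} {r₁ r₂ : ℝ} (hr : r₁ ≤ r₂) (hab : r₁ + r₂ ≤ dist a b)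
    (ha : 2 ^ t ≤ #{z | dist a z ≤ r₁}) (hb : #{z | dist b z < r₂} < 2 ^ (t + 1)) :
    (r₂ - r₁) / 12 ≤ expectedGap t a b := by
  set A : Finset X := {z | dist a z ≤ r₁}
  set B : Finset X := {z | dist b z < r₂}
  have hAB : Disjoint A B := disjoint_left.2 fun z hzA hzB => by
    have := dist_triangle_right a b z
    simp only [A, B, mem_filter, mem_univ, true_and] at hzA hzB
    linarith
  have hgap : ∀ S : Finset X, ¬Disjoint S A ∧ Disjoint S B →
      r₂ - r₁ ≤ |infDist a S - infDist b S| := by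
    rintro S ⟨hmeet, hmiss⟩
    obtain ⟨z, hzS, hzA⟩ := not_disjoint_iff.1 hmeet
    rw [abs_sub_comm]
    refine (sub_le_infDist_sub ⟨z, hzS, (mem_filter.1 hzA).2⟩ fun z hzS => ?_).trans
      (le_abs_self _)
    by_contra! hz
    exact disjoint_left.1 hmiss hzS (by simpa [B] using hz)
  calc (r₂ - r₁) / 12
      ≤ (r₂ - r₁) * ((1 - (1 - 2⁻¹ ^ (t + 1)) ^ #A) * (1 - 2⁻¹ ^ (t + 1)) ^ #B) := by
        nlinarith [twelfth_le_one_sub_pow_mul_pow ha hb]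
    _ = ∑ S with ¬Disjoint S A ∧ Disjoint S B, subsetWeight (2⁻¹ ^ (t + 1)) S * (r₂ - r₁) := by
        rw [← sum_mul, sum_subsetWeight_meet_disjoint _ hAB, mul_comm]
    _ ≤ ∑ S with ¬Disjoint S A ∧ Disjoint S B,
          subsetWeight (2⁻¹ ^ (t + 1)) S * |infDist a S - infDist b S| :=
        sum_le_sum fun S hS => mul_le_mul_of_nonneg_left (hgap S (mem_filter.1 hS).2)
          (subsetWeight_inv_two_pow_nonneg t S)
    _ ≤ expectedGap t a b :=
        sum_le_sum_of_subset_of_nonneg (filter_subset _ _) fun S _ _ =>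
          mul_nonneg (subsetWeight_inv_two_pow_nonneg t S) (abs_nonneg _)

/-- Bourgain's radius `ρ_t` for the pair `x, y`. -/
noncomputable def pairRadius (x y : X) (t : ℕ) : ℝ :=
  max (ballRadius x (2 ^ t) (dist x y / 4)) (ballRadius y (2 ^ t) (dist x y / 4))

lemma pairRadius_comm (x y : X) (t : ℕ) : pairRadius x y t = pairRadius y x t := by
  rw [pairRadius, pairRadius, max_comm, dist_comm]

lemma pairRadius_le (x y : X) (t : ℕ) : pairRadius x y t ≤ dist x y / 4 :=
  max_le (ballRadius_le _ _ _) (ballRadius_le _ _ _)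

lemma pairRadius_zero (x y : X) : pairRadius x y 0 = 0 := by
  simp [pairRadius, ballRadius_one _ (by positivity : 0 ≤ dist x y / 4)]

lemma pairRadius_log_card (x y : X) :
    pairRadius x y (Nat.log 2 (Fintype.card X) + 1) = dist x y / 4 := by
  simp [pairRadius, ballRadius_of_card_lt _ (Nat.lt_pow_succ_log_self one_lt_two _)]

lemma pairRadius_succ_sub_div_le_expectedGap (x y : X) (t : ℕ) :
    (pairRadius x y (t + 1) - pairRadius x y t) / 12 ≤ expectedGap t x y := by
  wlog hmax : pairRadius x y (t + 1) = ballRadius y (2 ^ (t + 1)) (dist x y / 4) generalizing x y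
  · rw [pairRadius_comm x, pairRadius_comm x, expectedGap_comm]
    refine this y x ?_
    rw [pairRadius, dist_comm y x, max_comm]
    exact (max_choice _ _).resolve_right hmax
  rcases le_or_gt (pairRadius x y (t + 1)) (pairRadius x y t) with hle | hlt
  · linarith [expectedGap_nonneg t x y]
  have hxR : ballRadius x (2 ^ t) (dist x y / 4) ≤ pairRadius x y t := le_max_left _ _
  have hball : 2 ^ t ≤ #{z | dist x z ≤ pairRadius x y t} :=
    (le_card_closedBall_ballRadius (hxR.trans_lt (hlt.trans_le (pairRadius_le x y _)))).trans
      (card_le_card (monotone_filter_right _ fun _ _ h => h.trans hxR))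
  refine le_expectedGap hlt.le ?_ hball ?_
  · linarith [pairRadius_le x y t, pairRadius_le x y (t + 1), dist_nonneg (x := x) (y := y)]
  · rw [hmax]
    exact card_ball_ballRadius_lt (by positivity) _

lemma dist_le_sum_expectedGap (x y : X) :
    dist x y ≤ 48 * ∑ t ∈ range (Nat.log 2 (Fintype.card X) + 1), expectedGap t x y := by
  have htelescope := sum_range_sub (pairRadius x y) (Nat.log 2 (Fintype.card X) + 1)
  rw [pairRadius_log_card, pairRadius_zero] at htelescope
  have := sum_le_sum fun t (_ : t ∈ range (Nat.log 2 (Fintype.card X) + 1)) =>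
    pairRadius_succ_sub_div_le_expectedGap x y t
  rw [← sum_div, htelescope] at this
  linarith

noncomputable def bourgainMap (x : X) (i : Fin (Nat.log 2 (Fintype.card X) + 1) × Finset X) : ℝ :=
  48 * subsetWeight (2⁻¹ ^ ((i.1 : ℕ) + 1)) i.2 * infDist x i.2

lemma sum_abs_bourgainMap_sub (x y : X) :
    ∑ i, |bourgainMap x i - bourgainMap y i|
      = 48 * ∑ t ∈ range (Nat.log 2 (Fintype.card X) + 1), expectedGap t x y := by
  simp only [Fintype.sum_prod_type, bourgainMap]
  rw [Fin.sum_univ_eq_sum_range (fun t => ∑ S : Finset X,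
    |48 * subsetWeight (2⁻¹ ^ (t + 1)) S * infDist x S
      - 48 * subsetWeight (2⁻¹ ^ (t + 1)) S * infDist y S|), mul_sum]
  refine sum_congr rfl fun t _ => ?_
  rw [expectedGap, mul_sum]
  refine sum_congr rfl fun S _ => ?_
  rw [← mul_sub, abs_mul, abs_of_nonneg (by positivity [subsetWeight_inv_two_pow_nonneg t S]),
    mul_assoc]

end Metric

end Bourgain

theorem exists_l1_embedding_distortion_log_card (X : Type*) [PseudoMetricSpace X] [Fintype X] :
    ∃ (m : ℕ) (g : X → Fin m → ℝ), ∀ x y, dist x y ≤ ∑ i, |g x i - g y i| ∧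
      ∑ i, |g x i - g y i| ≤ 48 * (Nat.log 2 (Fintype.card X) + 1) * dist x y := by
  obtain ⟨m, g, hg⟩ := exists_fin_sum_abs_sub_eq (Bourgain.bourgainMap (X := X))
  refine ⟨m, g, fun x y => ?_⟩
  rw [hg, Bourgain.sum_abs_bourgainMap_sub]
  refine ⟨Bourgain.dist_le_sum_expectedGap x y, ?_⟩
  calc 48 * ∑ t ∈ range (Nat.log 2 (Fintype.card X) + 1), Bourgain.expectedGap t x y
      ≤ 48 * ∑ t ∈ range (Nat.log 2 (Fintype.card X) + 1), dist x y := by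
        gcongr with t; exact Bourgain.expectedGap_le_dist t x y
    _ = 48 * (Nat.log 2 (Fintype.card X) + 1) * dist x y := by simp [mul_assoc]

section Net

variable {X : Type*} [PseudoMetricSpace X]

theorem exists_separated_net (r : X → ℝ) (hr : ∀ x, 0 ≤ r x) (F : Finset X) :
    ∃ N ⊆ F, (∀ a ∈ F, ∃ z ∈ N, dist a z ≤ 2 * r a) ∧
      (N : Set X).Pairwise fun z z' => r z + r z' < dist z z' := by
  classical
  induction F using Finset.strongInduction with
  | H F ih =>
    rcases F.eq_empty_or_nonempty with rfl | hF
    · exact ⟨∅, subset_refl _, by simp, by simp⟩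
    -- greedily keep a point of least radius and discard every point it serves
    obtain ⟨a₀, ha₀, hmin⟩ := F.exists_min_image r hF
    obtain ⟨N, hNF, hserve, hsep⟩ := ih {a ∈ F | ¬dist a a₀ ≤ 2 * r a}
      (filter_ssubset.2 ⟨a₀, ha₀, by simpa using hr a₀⟩)
    have hfar : ∀ z ∈ N, r a₀ + r z < dist a₀ z := fun z hz => by
      obtain ⟨hzF, hz⟩ := mem_filter.1 (hNF hz)
      linarith [hmin z hzF, dist_comm z a₀]
    refine ⟨insert a₀ N, insert_subset ha₀ fun z hz => (mem_filter.1 (hNF hz)).1,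
      fun a ha => ?_, ?_⟩
    · by_cases hc : dist a a₀ ≤ 2 * r a
      · exact ⟨a₀, mem_insert_self _ _, hc⟩
      · obtain ⟨z, hz, hdist⟩ := hserve a (mem_filter.2 ⟨ha, hc⟩)
        exact ⟨z, mem_insert_of_mem hz, hdist⟩
    · rw [coe_insert, Set.pairwise_insert]
      refine ⟨hsep, fun z hz _ => ⟨hfar z hz, ?_⟩⟩
      rw [add_comm, dist_comm]
      exact hfar z hz

theorem card_mul_le_card_of_pairwise_lt_dist [Fintype X] {N : Finset X} {r : X → ℝ}
    (hsep : (N : Set X).Pairwise fun z z' => r z + r z' < dist z z') {K : ℝ}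
    (hK : ∀ z ∈ N, K ≤ #{v | dist z v ≤ r z}) : #N * K ≤ Fintype.card X := by
  classical
  have hdisj : (N : Set X).PairwiseDisjoint fun z => ({v | dist z v ≤ r z} : Finset X) :=
    fun z hz z' hz' hne => disjoint_left.2 fun v hv hv' => by
      simp only [mem_filter, mem_univ, true_and] at hv hv'
      linarith [hsep hz hz' hne, dist_triangle_right z z' v]
  calc #N * K = ∑ _z ∈ N, K := by rw [sum_const, nsmul_eq_mul]
    _ ≤ ∑ z ∈ N, (#{v | dist z v ≤ r z} : ℝ) := sum_le_sum hK
    _ = #(N.biUnion fun z => {v | dist z v ≤ r z}) := by rw [card_biUnion hdisj]; push_cast; rfl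
    _ ≤ Fintype.card X := by exact_mod_cast card_le_univ _

theorem exists_l1_embedding_of_net [Fintype X] {N : Finset X} (hN : N.Nonempty) {m : ℕ}
    {g : N → Fin m → ℝ} {L : ℝ} (hL : 0 ≤ L)
    (hg : ∀ a b, dist a b ≤ ∑ i, |g a i - g b i| ∧ ∑ i, |g a i - g b i| ≤ L * dist a b) :
    ∃ (m' : ℕ) (f : X → Fin m' → ℝ), ∀ x y, dist x y ≤ ∑ i, |f x i - f y i| ∧
      ∑ i, |f x i - f y i| ≤ L * dist x y + (L + 1) * (infDist x N + infDist y N) := by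
  classical
  choose π hπN hπ using N.finite_toSet.isCompact.exists_infDist_eq_dist hN
  let F : X → Fin m ⊕ X → ℝ := fun x => Sum.elim (g ⟨π x, hπN x⟩) (Pi.single x (infDist x N))
  obtain ⟨m', f, hf⟩ := exists_fin_sum_abs_sub_eq F
  refine ⟨m', f, fun x y => ?_⟩
  rw [hf, Fintype.sum_sum_type]
  simp only [F, Sum.elim_inl, Sum.elim_inr]
  rcases eq_or_ne x y with rfl | hxy
  · simp only [dist_self, sub_self, abs_zero, sum_const_zero, add_zero, mul_zero, zero_add]
    exact ⟨le_rfl, mul_nonneg (by linarith) (add_nonneg infDist_nonneg infDist_nonneg)⟩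
  rw [sum_abs_single_sub_single hxy, abs_of_nonneg infDist_nonneg, abs_of_nonneg infDist_nonneg,
    hπ x, hπ y]
  have hg' := hg ⟨π x, hπN x⟩ ⟨π y, hπN y⟩
  simp only [Subtype.dist_eq] at hg'
  have hlower := dist_triangle4 x (π x) (π y) y
  have hupper : L * dist (π x) (π y) ≤ L * (dist x (π x) + dist x y + dist y (π y)) := by
    refine mul_le_mul_of_nonneg_left ?_ hL
    linarith [dist_triangle4 (π x) x y (π y), dist_comm x (π x)]
  constructor <;> linarith [hg'.1, hg'.2, dist_comm y (π y)]

end Net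

theorem exists_net_covering_far_pairs {V : Type*} [PseudoMetricSpace V] [Fintype V]
    [Nonempty V] {G : SimpleGraph V} {w : Sym2 V → ℝ} (hw : ∀ e ∈ G.edgeSet, 0 < w e)
    (hd : ∀ u v, IsLeast {x | ∃ p : G.Walk u v, p.IsPath ∧ G.walkWeight w p = x} (dist u v))
    {ε : ℝ} (hε : 0 < ε) (hε₁ : ε ≤ 1) :
    ∃ N : Finset V, N.Nonempty ∧ (#N : ℝ) ≤ 1 / ε ∧
      ∀ a b, ε * Fintype.card V ≤ G.dist a b → infDist a N ≤ 2 * dist a b := by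
  classical
  let far : V → Finset V := fun a => {b | ε * Fintype.card V ≤ G.dist a b}
  obtain ⟨N, hNF, hserve, hsep⟩ := exists_separated_net (fun a => infDist a (far a : Set V))
    (fun _ => infDist_nonneg) {a | (far a).Nonempty}
  have hcover : ∀ a b, ε * Fintype.card V ≤ G.dist a b → ∃ z ∈ N, dist a z ≤ 2 * dist a b :=
    fun a b hab => by
      have hb : b ∈ far a := by simpa [far] using hab
      obtain ⟨z, hz, hdist⟩ := hserve a (by simpa using ⟨b, hb⟩)
      exact ⟨z, hz, hdist.trans (by gcongr; exact infDist_le_dist_of_mem (mem_coe.2 hb))⟩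
  rcases N.eq_empty_or_nonempty with rfl | hN
  · obtain ⟨v⟩ := ‹Nonempty V›
    refine ⟨{v}, singleton_nonempty v, ?_, fun a b hab => ?_⟩
    · rw [card_singleton, Nat.cast_one, le_div_iff₀ hε, one_mul]; exact hε₁
    · obtain ⟨z, hz, -⟩ := hcover a b hab
      exact absurd hz (notMem_empty z)
  refine ⟨N, hN, ?_, fun a b hab => ?_⟩
  · have hball : ∀ z ∈ N, ε * Fintype.card V ≤ #{v | dist z v ≤ infDist z (far z : Set V)} :=
      fun z hz => by
        obtain ⟨b, hb, hzb⟩ := (far z).finite_toSet.isCompact.exists_infDist_eq_dist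
          (by simpa using hNF hz) z
        rw [hzb]
        exact (by simpa [far] using hb : ε * Fintype.card V ≤ G.dist z b).trans
          (by exact_mod_cast (G.dist_lt_card_of_isLeast hw hd z b).le)
    have hcard := card_mul_le_card_of_pairwise_lt_dist hsep hball
    have hn : (0 : ℝ) < Fintype.card V := by exact_mod_cast Fintype.card_pos
    rw [le_div_iff₀ hε]
    nlinarith
  · obtain ⟨z, hz, hdist⟩ := hcover a b hab
    exact (infDist_le_dist_of_mem (mem_coe.2 hz)).trans hdist

lemma bourgain_distortion_le_log {ε : ℝ} (hε : 0 < ε) (hε₂ : ε < 1 / 2) {k : ℕ}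
    (hk : (k : ℝ) ≤ 1 / ε) : 5 * (48 * ((Nat.log 2 k : ℝ) + 1)) + 4 ≤ 1000 * Real.log (1 / ε) := by
  have hlog2 : Real.log 2 ≤ Real.log (1 / ε) :=
    Real.log_le_log two_pos (by rw [le_div_iff₀ hε]; linarith)
  have hlogk : Real.log k ≤ Real.log (1 / ε) := by
    rcases k.eq_zero_or_pos with rfl | hk₀
    · simpa using hlog2.trans' (Real.log_nonneg one_le_two)
    · exact Real.log_le_log (by exact_mod_cast hk₀) hk
  have hnatlog : (Nat.log 2 k : ℝ) * Real.log 2 ≤ Real.log k := by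
    have := Real.natLog_le_logb k 2
    rw [Nat.cast_ofNat, Real.logb, le_div_iff₀ (Real.log_pos one_lt_two)] at this
    exact this
  nlinarith [Real.log_two_gt_d9, Nat.cast_nonneg (α := ℝ) (Nat.log 2 k)]

/-- There is a universal constant `C` such that the following holds. Let `G = (V, E, w)` be a
finite weighted undirected graph with `n` vertices, `d` its shortest-path metric w.r.t. `w` and
`d_unw = G.dist` its shortest-path metric w.r.t. unit weights. Then for every `ε ∈ (0, 1/2)`
there exist `m ∈ ℕ` and `f : V → (ℝ^m, ℓ1)` with `ε`-distortion at most `C · log(1/ε)`: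
`‖f v1 − f v2‖₁ ≥ d(v1, v2)` for all `v1, v2`, and
`‖f v1 − f v2‖₁ ≤ C · log(1/ε) · d(v1, v2)` whenever `d_unw(v1, v2) ≥ ε·n`. -/
theorem large_distance_l1_embedding_general :
    ∃ C : ℝ, 0 < C ∧
      ∀ (V : Type) [Fintype V] (G : SimpleGraph V) (w : Sym2 V → ℝ),
        (∀ e ∈ G.edgeSet, 0 < w e) →
        ∀ d : V → V → ℝ,
        (∀ u v : V,
          IsLeast {x : ℝ | ∃ p : G.Walk u v, p.IsPath ∧ G.walkWeight w p = x} (d u v)) →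
        ∀ ε : ℝ, 0 < ε → ε < 1 / 2 →
          ∃ (m : ℕ) (f : V → (Fin m → ℝ)),
            (∀ v1 v2 : V, d v1 v2 ≤ ∑ i, |f v1 i - f v2 i|) ∧
            (∀ v1 v2 : V, ε * (Fintype.card V : ℝ) ≤ (G.dist v1 v2 : ℝ) →
              ∑ i, |f v1 i - f v2 i| ≤ C * Real.log (1 / ε) * d v1 v2) := by
  refine ⟨1000, by norm_num, fun V _ G w hw d hd ε hε hε₂ => ?_⟩
  rcases isEmpty_or_nonempty V with hV | hV
  · exact ⟨0, fun _ => 0, fun v => isEmptyElim v, fun v => isEmptyElim v⟩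
  let := G.shortestPathPseudoMetric hw hd
  obtain ⟨N, hN, hNcard, hNfar⟩ := exists_net_covering_far_pairs hw hd hε (by linarith)
  obtain ⟨_, g, hg⟩ := exists_l1_embedding_distortion_log_card N
  obtain ⟨m, f, hf⟩ := exists_l1_embedding_of_net hN (by positivity) hg
  refine ⟨m, f, fun v1 v2 => (hf v1 v2).1, fun v1 v2 hfar => ?_⟩
  have h₁ : infDist v1 N ≤ 2 * dist v1 v2 := hNfar v1 v2 hfar
  have h₂ : infDist v2 N ≤ 2 * dist v1 v2 := dist_comm v1 v2 ▸ hNfar v2 v1 (by rwa [G.dist_comm])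
  rw [Fintype.card_coe] at hf
  calc ∑ i, |f v1 i - f v2 i|
      ≤ 48 * (Nat.log 2 #N + 1) * dist v1 v2
        + (48 * (Nat.log 2 #N + 1) + 1) * (infDist v1 N + infDist v2 N) := (hf v1 v2).2
    _ ≤ (5 * (48 * (Nat.log 2 #N + 1)) + 4) * dist v1 v2 := by nlinarith
    _ ≤ 1000 * Real.log (1 / ε) * d v1 v2 :=
      mul_le_mul_of_nonneg_right (bourgain_distortion_le_log hε hε₂ hNcard) dist_nonneg
end

section
/- There is a universal constant C such that every finite metric space (V, d) with n ≥ 2 points admits, for some m ∈ ℕ, a map f : V → ℝ^m with d(v1, v2) ≤ ‖f(v1) − f(v2)‖₁ ≤ C · log n · d(v1, v2) for all v1, v2 ∈ V. -/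
/-!
For a random subset `S` of `V`, the Fréchet coordinate `x ↦ d(x, S)` is 1-Lipschitz. Take one
such coordinate for every subset `S`, weighted by the probability of `S` when points are kept
independently with probability `2^-(k+1)`, for each of the `⌊log₂ n⌋ + 1` scales `k`; this
costs the factor `O(log n)` in the upper bound.

For the lower bound fix `u, v` and let `ρ_k` be the least radius at which the closed balls
around `u` and around `v` both contain `2^k` points, capped at `d(u,v)/2`. For `ρ_k < r₀ < r₁ <
ρ_{k+1}` one of the two points, say `w`, has fewer than `2^(k+1)` points within `r₁`, while the
other, `w'`, has at least `2^k` points within `r₀`. At scale `k` the set `S` meets the second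
ball and misses the first with probability at least `1/12`, and then
`d(w,S) - d(w',S) ≥ r₁ - r₀`. So scale `k` contributes at least `(ρ_{k+1} - ρ_k)/12`, and these
increments add up to `d(u,v)/2`.
-/

open Finset Metric

noncomputable section

namespace BourgainEmbedding

section RandomSubset

variable {α : Type*} [Fintype α]

def bernoulliWeight (p : ℝ) (S : Finset α) : ℝ :=
  p ^ #S * (1 - p) ^ (Fintype.card α - #S)

lemma bernoulliWeight_nonneg {p : ℝ} (hp₀ : 0 ≤ p) (hp₁ : p ≤ 1) (S : Finset α) :
    0 ≤ bernoulliWeight p S := by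
  have := sub_nonneg.2 hp₁
  unfold bernoulliWeight
  positivity

lemma sum_bernoulliWeight (p : ℝ) : ∑ S : Finset α, bernoulliWeight p S = 1 := by
  simp [bernoulliWeight, Fintype.sum_pow_mul_eq_add_pow]

variable [DecidableEq α]

lemma sum_bernoulliWeight_disjoint (p : ℝ) (B : Finset α) :
    ∑ S with Disjoint S B, bernoulliWeight p S = (1 - p) ^ #B := by
  have hfilter : ({S | Disjoint S B} : Finset (Finset α)) = Bᶜ.powerset := by
    ext S
    simp [subset_compl_iff_disjoint_right]
  have hweight : ∀ S ∈ Bᶜ.powerset,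
      bernoulliWeight p S = (1 - p) ^ #B * (p ^ #S * (1 - p) ^ (#Bᶜ - #S)) := by
    intro S hS
    have hS := card_le_card (mem_powerset.1 hS)
    have hB := card_le_univ B
    rw [card_compl] at hS ⊢
    rw [bernoulliWeight, mul_left_comm, ← pow_add]
    congr 2
    omega
  rw [hfilter, sum_congr rfl hweight, ← mul_sum, sum_pow_mul_eq_add_pow, add_sub_cancel,
    one_pow, mul_one]

lemma sum_bernoulliWeight_hit_miss (p : ℝ) {A B : Finset α} (hAB : Disjoint A B) :
    ∑ S with ¬Disjoint S A ∧ Disjoint S B, bernoulliWeight p S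
      = (1 - p) ^ #B - (1 - p) ^ (#A + #B) := by
  rw [← card_union_of_disjoint hAB, ← sum_bernoulliWeight_disjoint,
    ← sum_bernoulliWeight_disjoint, eq_sub_iff_add_eq, ← sum_union]
  · congr 1
    ext S
    simp only [mem_union, mem_filter, mem_univ, true_and, disjoint_union_right]
    tauto
  · exact disjoint_filter.2 fun S _ hS hS' => hS.1 (disjoint_union_right.1 hS').1

end RandomSubset

lemma pos_and_le_half_of_natCast_mul_eq_half {p : ℝ} {m : ℕ} (h : m * p = 1 / 2) :
    0 < p ∧ p ≤ 1 / 2 := by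
  have hm : (1 : ℝ) ≤ m := Nat.one_le_cast.2 (Nat.pos_of_ne_zero (by rintro rfl; norm_num at h))
  constructor <;> nlinarith

lemma one_twelfth_le_pow_sub_pow {p : ℝ} {m a b : ℕ} (hmp : m * p = 1 / 2) (ha : m ≤ a)
    (hb : b ≤ 2 * m) : 1 / 12 ≤ (1 - p) ^ b - (1 - p) ^ (a + b) := by
  obtain ⟨hp₀, hp⟩ := pos_and_le_half_of_natCast_mul_eq_half hmp
  have hq₀ : 0 ≤ 1 - p := by linarith
  have hq₁ : 1 - p ≤ 1 := by linarith
  -- Bernoulli's inequality: `(1 - p) ^ m ≥ 1 - m p = 1/2` and `(1 + p) ^ m ≥ 3/2`, while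
  -- `(1 - p) (1 + p) ≤ 1`.
  have hlower : 1 / 2 ≤ (1 - p) ^ m := by
    have := one_add_mul_le_pow (a := -p) (by linarith) m
    rw [← sub_eq_add_neg] at this
    linarith
  have hupper : (1 - p) ^ m ≤ 2 / 3 := by
    have h32 : 3 / 2 ≤ (1 + p) ^ m := by
      have := one_add_mul_le_pow (a := p) (by linarith) m
      linarith
    have : (1 - p) ^ m * (1 + p) ^ m ≤ 1 := by
      rw [← mul_pow]
      exact pow_le_one₀ (by nlinarith) (by nlinarith)
    nlinarith [pow_nonneg hq₀ m]
  have hqb : 1 / 4 ≤ (1 - p) ^ b :=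
    calc 1 / 4 ≤ ((1 - p) ^ m) ^ 2 := by nlinarith
      _ = (1 - p) ^ (2 * m) := by rw [← pow_mul, mul_comm]
      _ ≤ (1 - p) ^ b := pow_le_pow_of_le_one hq₀ hq₁ hb
  have hqa : (1 - p) ^ a ≤ 2 / 3 := (pow_le_pow_of_le_one hq₀ hq₁ ha).trans hupper
  rw [pow_add]
  nlinarith

lemma sub_le_of_forall_lt_lt_sub_le {a b c : ℝ} (hc : 0 ≤ c)
    (h : ∀ x y, a < x → x < y → y < b → y - x ≤ c) : b - a ≤ c := by
  by_contra! hlt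
  have := h (a + (b - a - c) / 4) (b - (b - a - c) / 4) (by linarith) (by linarith) (by linarith)
  linarith

lemma exists_fin_sum_abs_sub_eq {V ι : Type*} [Fintype ι] (g : V → ι → ℝ) :
    ∃ (m : ℕ) (f : V → Fin m → ℝ),
      ∀ x y, ∑ i, |f x i - f y i| = ∑ j, |g x j - g y j| :=
  ⟨_, fun x => g x ∘ (Fintype.equivFin ι).symm,
    fun x y => (Fintype.equivFin ι).symm.sum_comp fun j => |g x j - g y j|⟩

lemma natLog_two_add_one_le {n : ℕ} (hn : 2 ≤ n) :
    (Nat.log 2 n + 1 : ℝ) ≤ 2 / Real.log 2 * Real.log n := by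
  have hlogb : (Nat.log 2 n : ℝ) ≤ Real.logb 2 n := Real.natLog_le_logb n 2
  have hone : 1 ≤ Real.logb 2 n := by
    rw [← Real.logb_self_eq_one one_lt_two]
    exact Real.logb_le_logb_of_le one_lt_two two_pos (by exact_mod_cast hn)
  rw [div_mul_eq_mul_div, mul_div_assoc, ← Real.logb]
  linarith

section MetricSpace

variable {V : Type*} [Fintype V] [MetricSpace V]

def expectedGap (p : ℝ) (u v : V) : ℝ :=
  ∑ S : Finset V, bernoulliWeight p S * |infDist u (S : Set V) - infDist v S|

lemma expectedGap_comm (p : ℝ) (u v : V) : expectedGap p u v = expectedGap p v u := by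
  simp only [expectedGap, abs_sub_comm]

lemma expectedGap_nonneg {p : ℝ} (hp₀ : 0 ≤ p) (hp₁ : p ≤ 1) (u v : V) :
    0 ≤ expectedGap p u v :=
  sum_nonneg fun S _ => mul_nonneg (bernoulliWeight_nonneg hp₀ hp₁ S) (abs_nonneg _)

lemma expectedGap_le_dist {p : ℝ} (hp₀ : 0 ≤ p) (hp₁ : p ≤ 1) (u v : V) :
    expectedGap p u v ≤ dist u v :=
  calc expectedGap p u v ≤ ∑ S : Finset V, bernoulliWeight p S * dist u v := by
        refine sum_le_sum fun S _ =>
          mul_le_mul_of_nonneg_left ?_ (bernoulliWeight_nonneg hp₀ hp₁ S)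
        simpa [Real.dist_eq] using (lipschitz_infDist_pt (S : Set V)).dist_le_mul u v
    _ = dist u v := by rw [← sum_mul, sum_bernoulliWeight, one_mul]

lemma div_twelve_le_expectedGap {p r₀ r₁ : ℝ} {m : ℕ} {w w' : V} (hmp : m * p = 1 / 2)
    (hA : m ≤ #{x | dist x w' ≤ r₀}) (hB : #{x | dist x w ≤ r₁} ≤ 2 * m)
    (hr : r₀ + r₁ < dist w w') :
    (r₁ - r₀) / 12 ≤ expectedGap p w w' := by
  classical
  obtain ⟨hp₀, hp⟩ := pos_and_le_half_of_natCast_mul_eq_half hmp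
  have hweight := fun S : Finset V => bernoulliWeight_nonneg hp₀.le (by linarith) S
  rcases le_or_gt r₁ r₀ with hle | hlt
  · linarith [expectedGap_nonneg hp₀.le (by linarith) w w']
  set A : Finset V := {x | dist x w' ≤ r₀}
  set B : Finset V := {x | dist x w ≤ r₁}
  have hAB : Disjoint A B := by
    refine disjoint_left.2 fun x hxA hxB => ?_
    simp only [A, B, mem_filter, mem_univ, true_and] at hxA hxB
    linarith [dist_triangle_left w w' x]
  have hgap : ∀ S : Finset V, ¬Disjoint S A → Disjoint S B →
      r₁ - r₀ ≤ |infDist w (S : Set V) - infDist w' S| := by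
    intro S hSA hSB
    obtain ⟨a, haS, haA⟩ := not_disjoint_iff.1 hSA
    have hnear : infDist w' (S : Set V) ≤ r₀ := by
      refine (infDist_le_dist_of_mem (mem_coe.2 haS)).trans ?_
      simpa [A, dist_comm] using haA
    have hfar : r₁ ≤ infDist w (S : Set V) := by
      refine (le_infDist ⟨a, haS⟩).2 fun y hy => ?_
      have hyB : y ∉ B := disjoint_left.1 hSB hy
      simp only [B, mem_filter, mem_univ, true_and, not_le] at hyB
      rw [dist_comm]
      exact hyB.le
    exact (by linarith : r₁ - r₀ ≤ _).trans (le_abs_self _)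
  calc (r₁ - r₀) / 12 ≤ ((1 - p) ^ #B - (1 - p) ^ (#A + #B)) * (r₁ - r₀) := by
        nlinarith [one_twelfth_le_pow_sub_pow hmp hA hB]
    _ = ∑ S with ¬Disjoint S A ∧ Disjoint S B, bernoulliWeight p S * (r₁ - r₀) := by
        rw [← sum_mul, sum_bernoulliWeight_hit_miss p hAB]
    _ ≤ ∑ S with ¬Disjoint S A ∧ Disjoint S B,
          bernoulliWeight p S * |infDist w (S : Set V) - infDist w' S| := by
        refine sum_le_sum fun S hS => mul_le_mul_of_nonneg_left ?_ (hweight S)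
        exact hgap S (mem_filter.1 hS).2.1 (mem_filter.1 hS).2.2
    _ ≤ expectedGap p w w' :=
        sum_le_sum_of_subset_of_nonneg (filter_subset _ _)
          fun S _ _ => mul_nonneg (hweight S) (abs_nonneg _)

def wideRadii (u v : V) (k : ℕ) : Set ℝ :=
  {r | 2 ^ k ≤ #{x | dist x u ≤ r} ∧ 2 ^ k ≤ #{x | dist x v ≤ r}}

/-- Including `dist u v / 2` keeps the set nonempty, so that `sInf` is not the junk value `0`. -/
def scaleRadius (u v : V) (k : ℕ) : ℝ :=
  sInf (insert (dist u v / 2) (wideRadii u v k))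

lemma nonneg_of_mem_wideRadii {u v : V} {k : ℕ} {r : ℝ} (hr : r ∈ wideRadii u v k) :
    0 ≤ r := by
  by_contra! hneg
  have hempty : ({x | dist x u ≤ r} : Finset V) = ∅ :=
    filter_eq_empty_iff.2 fun x _ => not_le.2 (hneg.trans_le dist_nonneg)
  have := hr.1
  rw [hempty, card_empty] at this
  exact (Nat.two_pow_pos k).not_ge this

lemma mem_wideRadii_of_le {u v : V} {k : ℕ} {r s : ℝ} (hr : r ∈ wideRadii u v k)
    (hrs : r ≤ s) : s ∈ wideRadii u v k := by
  have mono (w : V) : #{x | dist x w ≤ r} ≤ #{x | dist x w ≤ s} :=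
    card_le_card fun x hx => by
      simp only [mem_filter, mem_univ, true_and] at hx ⊢
      exact hx.trans hrs
  exact ⟨hr.1.trans (mono u), hr.2.trans (mono v)⟩

lemma zero_mem_wideRadii (u v : V) : (0 : ℝ) ∈ wideRadii u v 0 := by
  refine ⟨card_pos.2 ⟨u, ?_⟩, card_pos.2 ⟨v, ?_⟩⟩ <;> simp

lemma wideRadii_eq_empty {u v : V} {k : ℕ} (hk : Fintype.card V < 2 ^ k) :
    wideRadii u v k = ∅ :=
  Set.eq_empty_of_forall_notMem fun _ hr => (hk.trans_le hr.1).not_ge (card_le_univ _)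

lemma bddBelow_insert_wideRadii (u v : V) (k : ℕ) :
    BddBelow (insert (dist u v / 2) (wideRadii u v k)) :=
  ⟨0, Set.forall_mem_insert.2 ⟨by positivity, fun _ => nonneg_of_mem_wideRadii⟩⟩

lemma scaleRadius_nonneg (u v : V) (k : ℕ) : 0 ≤ scaleRadius u v k :=
  le_csInf (Set.insert_nonempty _ _)
    (Set.forall_mem_insert.2 ⟨by positivity, fun _ => nonneg_of_mem_wideRadii⟩)

lemma scaleRadius_le_half (u v : V) (k : ℕ) : scaleRadius u v k ≤ dist u v / 2 :=
  csInf_le (bddBelow_insert_wideRadii u v k) (Set.mem_insert _ _)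

lemma scaleRadius_zero (u v : V) : scaleRadius u v 0 = 0 :=
  le_antisymm (csInf_le (bddBelow_insert_wideRadii u v 0)
    (Set.mem_insert_of_mem _ (zero_mem_wideRadii u v))) (scaleRadius_nonneg u v 0)

lemma scaleRadius_of_card_lt {u v : V} {k : ℕ} (hk : Fintype.card V < 2 ^ k) :
    scaleRadius u v k = dist u v / 2 := by
  rw [scaleRadius, wideRadii_eq_empty hk, insert_empty_eq, csInf_singleton]

lemma mem_wideRadii_of_scaleRadius_lt {u v : V} {k : ℕ} {r : ℝ} (h : scaleRadius u v k < r)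
    (hr : r < dist u v / 2) : r ∈ wideRadii u v k := by
  obtain ⟨s, hs, hsr⟩ := exists_lt_of_csInf_lt (Set.insert_nonempty _ _) h
  rcases Set.mem_insert_iff.1 hs with rfl | hs
  · exact absurd hsr hr.not_gt
  · exact mem_wideRadii_of_le hs hsr.le

lemma notMem_wideRadii_of_lt_scaleRadius {u v : V} {k : ℕ} {r : ℝ} (h : r < scaleRadius u v k) :
    r ∉ wideRadii u v k := fun hr =>
  h.not_ge (csInf_le (bddBelow_insert_wideRadii u v k) (Set.mem_insert_of_mem _ hr))

lemma scaleRadius_succ_sub_le (u v : V) (k : ℕ) :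
    (scaleRadius u v (k + 1) - scaleRadius u v k) / 12 ≤ expectedGap (2 ^ (k + 1))⁻¹ u v := by
  have hmp : ((2 ^ k : ℕ) : ℝ) * (2 ^ (k + 1))⁻¹ = 1 / 2 := by
    rw [pow_succ]; push_cast; field_simp
  have hp₀ : (0 : ℝ) ≤ (2 ^ (k + 1))⁻¹ := by positivity
  have hp₁ : ((2 : ℝ) ^ (k + 1))⁻¹ ≤ 1 :=
    inv_le_one_of_one_le₀ (one_le_pow₀ one_le_two)
  rw [div_le_iff₀ (by norm_num)]
  -- Radii strictly between `ρ_k` and `ρ_{k+1}` avoid asking whether the infima are attained.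
  refine sub_le_of_forall_lt_lt_sub_le (by linarith [expectedGap_nonneg hp₀ hp₁ u v])
    fun r₀ r₁ h₀ h₀₁ h₁ => ?_
  have hhalf := scaleRadius_le_half u v (k + 1)
  have hr : r₀ + r₁ < dist u v := by linarith
  obtain ⟨hAu, hAv⟩ := mem_wideRadii_of_scaleRadius_lt h₀ (by linarith)
  have hB := notMem_wideRadii_of_lt_scaleRadius h₁
  simp only [wideRadii, Set.mem_ofPred_eq, not_and_or, not_le, pow_succ] at hB
  rcases hB with hBu | hBv
  · linarith [div_twelve_le_expectedGap hmp hAv (by omega) hr]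
  · have := div_twelve_le_expectedGap (r₁ := r₁) (w := v) (w' := u) hmp hAu (by omega)
      (by rwa [dist_comm])
    rw [expectedGap_comm] at this
    linarith

lemma dist_le_sum_expectedGap (u v : V) {T : ℕ} (hT : Fintype.card V < 2 ^ T) :
    dist u v ≤ 24 * ∑ k ∈ range T, expectedGap (2 ^ (k + 1))⁻¹ u v := by
  have htelescope : ∑ k ∈ range T, (scaleRadius u v (k + 1) - scaleRadius u v k) / 12
      = dist u v / 24 := by
    rw [← sum_div, sum_range_sub (scaleRadius u v), scaleRadius_of_card_lt hT, scaleRadius_zero]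
    ring
  have := sum_le_sum fun k (_ : k ∈ range T) => scaleRadius_succ_sub_le u v k
  linarith

lemma sum_expectedGap_le (u v : V) (T : ℕ) :
    ∑ k ∈ range T, expectedGap (2 ^ (k + 1))⁻¹ u v ≤ T * dist u v := by
  simpa using sum_le_card_nsmul (range T) _ _ fun k _ =>
    expectedGap_le_dist (by positivity) (inv_le_one_of_one_le₀ (one_le_pow₀ one_le_two)) u v

end MetricSpace

lemma exists_l1_embedding_natLog (V : Type*) [Fintype V] [MetricSpace V] :
    ∃ (m : ℕ) (f : V → Fin m → ℝ), ∀ v₁ v₂ : V,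
      dist v₁ v₂ ≤ ∑ i, |f v₁ i - f v₂ i| ∧
      ∑ i, |f v₁ i - f v₂ i| ≤ 24 * (Nat.log 2 (Fintype.card V) + 1) * dist v₁ v₂ := by
  set T := Nat.log 2 (Fintype.card V) + 1
  obtain ⟨m, f, hf⟩ := exists_fin_sum_abs_sub_eq fun (x : V) (j : Fin T × Finset V) =>
    24 * bernoulliWeight (2 ^ ((j.1 : ℕ) + 1))⁻¹ j.2 * infDist x (j.2 : Set V)
  have hsum (x y : V) :
      ∑ i, |f x i - f y i| = 24 * ∑ k ∈ range T, expectedGap (2 ^ (k + 1))⁻¹ x y := by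
    rw [hf, Fintype.sum_prod_type, ← Fin.sum_univ_eq_sum_range, mul_sum]
    refine sum_congr rfl fun k _ => ?_
    rw [expectedGap, mul_sum]
    refine sum_congr rfl fun S _ => ?_
    have hw := bernoulliWeight_nonneg (p := (2 ^ ((k : ℕ) + 1))⁻¹) (by positivity)
      (inv_le_one_of_one_le₀ (one_le_pow₀ one_le_two)) S
    rw [← mul_sub, abs_mul, abs_of_nonneg (by positivity), mul_assoc]
  refine ⟨m, f, fun v₁ v₂ => ⟨?_, ?_⟩⟩
  · rw [hsum]
    exact dist_le_sum_expectedGap v₁ v₂ (Nat.lt_pow_succ_log_self one_lt_two _)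
  · rw [hsum, mul_assoc]
    exact mul_le_mul_of_nonneg_left (by exact_mod_cast sum_expectedGap_le v₁ v₂ T) (by norm_num)

end BourgainEmbedding

end

open BourgainEmbedding in
/-- Bourgain's theorem: there is a universal constant `C` such that every finite metric space
`(V, d)` with `n ≥ 2` points admits, for some `m`, a map `f : V → (ℝ^m, ℓ1)` with
`d(v1, v2) ≤ ‖f v1 − f v2‖₁ ≤ C · log n · d(v1, v2)` for all `v1, v2`. -/
theorem bourgain_l1_embedding :
    ∃ C : ℝ, 0 < C ∧
      ∀ (V : Type) [Fintype V] [MetricSpace V], 2 ≤ Fintype.card V →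
        ∃ (m : ℕ) (f : V → (Fin m → ℝ)),
          ∀ v1 v2 : V,
            dist v1 v2 ≤ ∑ i, |f v1 i - f v2 i| ∧
            ∑ i, |f v1 i - f v2 i| ≤ C * Real.log (Fintype.card V) * dist v1 v2 := by
  refine ⟨48 / Real.log 2, by positivity, fun V _ _ hV => ?_⟩
  obtain ⟨m, f, hf⟩ := exists_l1_embedding_natLog V
  refine ⟨m, f, fun v1 v2 =>
    ⟨(hf v1 v2).1, (hf v1 v2).2.trans (mul_le_mul_of_nonneg_right ?_ dist_nonneg)⟩⟩
  calc 24 * ((Nat.log 2 (Fintype.card V) : ℝ) + 1)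
      ≤ 24 * (2 / Real.log 2 * Real.log (Fintype.card V)) := by
        gcongr
        exact natLog_two_add_one_le hV
    _ = 48 / Real.log 2 * Real.log (Fintype.card V) := by ring
end
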